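/- Let q ≥ 2 and C(q) = min{c ≥ 1 : F_c ≥ q}. For every N ≥ 1, the length of the Zeckendorf word of qN differs from the length of the Zeckendorf word of N by at most C(q); more precisely, |Z(N)| ≤ |Z(qN)| ≤ |Z(N)| + C(q). -/
import Mathlib

/-- Let `q ≥ 2`, `C = C(q)` minimal with `C ≥ 1`, `F_C ≥ q`.  If `N ≥ 1` has
Zeckendorf leading index `k` (so the Zeckendorf word of `N` has length `k − 1`)
and `q·N` has leading index `k'` (word length `k' − 1`), then
`|Z(N)| ≤ |Z(qN)| ≤ |Z(N)| + C`. -/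
theorem zeckendorf_length_bound (q C N k k' : ℕ) (hq : 2 ≤ q)
    (hC1 : 1 ≤ C) (hCq : q ≤ Nat.fib C)
    (hmin : ∀ c, 1 ≤ c → q ≤ Nat.fib c → C ≤ c)
    (hN : 1 ≤ N)
    (hk : 2 ≤ k) (h₁ : Nat.fib k ≤ N) (h₂ : N < Nat.fib (k + 1))
    (hk' : 2 ≤ k') (h₁' : Nat.fib k' ≤ q * N) (h₂' : q * N < Nat.fib (k' + 1)) :
    k - 1 ≤ k' - 1 ∧ k' - 1 ≤ (k - 1) + C := by
  have hle : k ≤ k' := by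
    by_contra h
    push_neg at h
    have : Nat.fib (k' + 1) ≤ Nat.fib k := Nat.fib_mono h
    have hNle : N ≤ q * N := Nat.le_mul_of_pos_left N (by omega)
    omega
  have hup : k' < k + C := by
    have h1 : q * N < Nat.fib C * Nat.fib (k + 1) := by
      calc q * N < q * Nat.fib (k + 1) := by
            exact Nat.mul_lt_mul_of_pos_left h₂ (by omega)
        _ ≤ Nat.fib C * Nat.fib (k + 1) := Nat.mul_le_mul_right _ hCq
    have h2 : Nat.fib k * Nat.fib (C - 1) + Nat.fib (k + 1) * Nat.fib C
        = Nat.fib (k + C) := by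
      have := Nat.fib_add k (C - 1)
      have hC : k + (C - 1) + 1 = k + C := by omega
      have hC2 : C - 1 + 1 = C := by omega
      rw [hC, hC2] at this
      omega
    have h3 : Nat.fib k' < Nat.fib (k + C) := by
      calc Nat.fib k' ≤ q * N := h₁'
        _ < Nat.fib C * Nat.fib (k + 1) := h1
        _ ≤ Nat.fib (k + C) := by rw [← h2]; nlinarith [Nat.fib k * Nat.fib (C-1)]
    by_contra h
    push_neg at h
    exact absurd (Nat.fib_mono h) (by omega)
  omega
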